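/- Fix loss parameters l01, l11 ∈ ℝ with 0 ≤ l11 < l01, set c = l01 − l11 and l_max = max(1, c), let x_max > 0, and let ε satisfy 0 < ε < min(1, c). Then for all θ, θ' ∈ ℝ^d with ‖θ − θ'‖₁ ≤ ε/(l_max·x_max) and every x ∈ ℝ^d with ‖x‖_∞ ≤ x_max, the distortion rate satisfies d(θ, θ'; x) ≤ ε. -/

import Mathlib

/-- The logistic (sigmoid) function `σ(z) = 1/(1+e^{-z})`. -/
noncomputable def logistic (z : ℝ) : ℝ := 1 / (1 + Real.exp (-z))

/-- Expected loss of label `a ∈ {0,1}` under parameter `θ` and context `x`: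
`μ(0,θ;x) = l01·σ(xᵀθ)` and `μ(1,θ;x) = 1 + (l11−1)·σ(xᵀθ)`. -/
noncomputable def expLoss {d : ℕ} (l01 l11 : ℝ) (a : Fin 2) (θ x : Fin d → ℝ) : ℝ :=
  if a = 0 then l01 * logistic (∑ i, x i * θ i)
  else 1 + (l11 - 1) * logistic (∑ i, x i * θ i)

/-- The optimal action: `1` if `μ(1,θ;x) ≤ μ(0,θ;x)`, else `0`. -/
noncomputable def optAct {d : ℕ} (l01 l11 : ℝ) (θ x : Fin d → ℝ) : Fin 2 :=
  if expLoss l01 l11 1 θ x ≤ expLoss l01 l11 0 θ x then 1 else 0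

/-- The distortion rate `d(θ,θ';x) = μ(α(θ;x),θ';x) − μ(α(θ';x),θ';x)`. -/
noncomputable def distRate {d : ℕ} (l01 l11 : ℝ) (θ θ' x : Fin d → ℝ) : ℝ :=
  expLoss l01 l11 (optAct l01 l11 θ x) θ' x - expLoss l01 l11 (optAct l01 l11 θ' x) θ' x

/-! The gap `μ(1, θ; x) − μ(0, θ; x) = 1 − (c + 1)·σ(xᵀθ)` decides the optimal action by its sign,
so a wrong decision at `θ'` costs at most the change of the gap between `θ` and `θ'`, i.e.
`(c + 1)·|σ(xᵀθ) − σ(xᵀθ')|`. Since `σ' = σ(1 − σ) ≤ 1/4` and `|xᵀ(θ − θ')| ≤ x_max‖θ − θ'‖₁`,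
this is at most `(c + 1)·ε/(4 l_max) ≤ ε/2`. -/

lemma logistic_eq_sigmoid : logistic = Real.sigmoid := by
  funext z
  rw [Real.sigmoid_def, ← one_div]; rfl

lemma sigmoid_mul_one_sub_sigmoid_le (z : ℝ) : Real.sigmoid z * (1 - Real.sigmoid z) ≤ 4⁻¹ := by
  nlinarith [sq_nonneg (2 * Real.sigmoid z - 1)]

lemma lipschitzWith_sigmoid : LipschitzWith 4⁻¹ Real.sigmoid := by
  refine lipschitzWith_of_nnnorm_deriv_le differentiable_sigmoid fun z => ?_
  have h_nonneg : 0 ≤ Real.sigmoid z * (1 - Real.sigmoid z) :=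
    mul_nonneg (Real.sigmoid_nonneg z) (sub_nonneg.mpr (Real.sigmoid_le_one z))
  rw [Real.deriv_sigmoid, ← NNReal.coe_le_coe, coe_nnnorm, Real.norm_of_nonneg h_nonneg]
  simpa using sigmoid_mul_one_sub_sigmoid_le z

lemma abs_sigmoid_sub_sigmoid_le (a b : ℝ) : |Real.sigmoid a - Real.sigmoid b| ≤ |a - b| / 4 := by
  have h := lipschitzWith_sigmoid.dist_le_mul a b
  rw [Real.dist_eq, Real.dist_eq, NNReal.coe_inv, NNReal.coe_ofNat] at h
  linarith

lemma abs_sum_mul_sub_sum_mul_le {ι : Type*} [Fintype ι] (x θ θ' : ι → ℝ) {xmax : ℝ}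
    (hxb : ∀ i, |x i| ≤ xmax) :
    |∑ i, x i * θ i - ∑ i, x i * θ' i| ≤ xmax * ∑ i, |θ i - θ' i| := by
  rw [← Finset.sum_sub_distrib, Finset.mul_sum]
  refine (Finset.abs_sum_le_sum_abs _ _).trans (Finset.sum_le_sum fun i _ => ?_)
  rw [← mul_sub, abs_mul]
  exact mul_le_mul_of_nonneg_right (hxb i) (abs_nonneg _)

section LossGap

variable {d : ℕ} (l01 l11 : ℝ)

noncomputable def lossGap (θ x : Fin d → ℝ) : ℝ :=
  expLoss l01 l11 1 θ x - expLoss l01 l11 0 θ x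

lemma lossGap_eq (θ x : Fin d → ℝ) :
    lossGap l01 l11 θ x = 1 - (l01 - l11 + 1) * Real.sigmoid (∑ i, x i * θ i) := by
  simp only [lossGap, expLoss, logistic_eq_sigmoid, one_ne_zero, if_false, if_true]
  ring

lemma lossGap_sub_lossGap (θ θ' x : Fin d → ℝ) :
    lossGap l01 l11 θ x - lossGap l01 l11 θ' x =
      (l01 - l11 + 1) * (Real.sigmoid (∑ i, x i * θ' i) - Real.sigmoid (∑ i, x i * θ i)) := by
  rw [lossGap_eq, lossGap_eq]
  ring

lemma distRate_le_abs_lossGap_sub (θ θ' x : Fin d → ℝ) :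
    distRate l01 l11 θ θ' x ≤ |lossGap l01 l11 θ x - lossGap l01 l11 θ' x| := by
  have h_one (τ : Fin d → ℝ) :
      expLoss l01 l11 1 τ x = lossGap l01 l11 τ x + expLoss l01 l11 0 τ x := by
    rw [lossGap]; ring
  have h_le := le_abs_self (lossGap l01 l11 θ x - lossGap l01 l11 θ' x)
  have h_ge := neg_abs_le (lossGap l01 l11 θ x - lossGap l01 l11 θ' x)
  unfold distRate optAct
  split_ifs <;> linarith [h_one θ, h_one θ']

end LossGap

theorem distRate_le_of_l1_close_general
    (d : ℕ) (l01 l11 : ℝ) (hlt : l11 < l01)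
    (xmax : ℝ) (hx : 0 < xmax)
    (ε : ℝ) (hε0 : 0 < ε)
    (θ θ' x : Fin d → ℝ)
    (hθ : ∑ i, |θ i - θ' i| ≤ ε / (max 1 (l01 - l11) * xmax))
    (hxb : ∀ i, |x i| ≤ xmax) :
    distRate l01 l11 θ θ' x ≤ ε := by
  set lmax := max 1 (l01 - l11)
  have hlmax : 0 < lmax := one_pos.trans_le (le_max_left _ _)
  have hc_pos : 0 < l01 - l11 + 1 := by linarith
  have hc_le : l01 - l11 + 1 ≤ 2 * lmax := by
    linarith [le_max_left 1 (l01 - l11), le_max_right 1 (l01 - l11)]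
  have hscore : |∑ i, x i * θ i - ∑ i, x i * θ' i| ≤ ε / lmax := by
    calc _ ≤ xmax * ∑ i, |θ i - θ' i| := abs_sum_mul_sub_sum_mul_le x θ θ' hxb
      _ ≤ xmax * (ε / (lmax * xmax)) := mul_le_mul_of_nonneg_left hθ hx.le
      _ = ε / lmax := by field_simp
  calc distRate l01 l11 θ θ' x
      ≤ |lossGap l01 l11 θ x - lossGap l01 l11 θ' x| := distRate_le_abs_lossGap_sub l01 l11 θ θ' x
    _ = (l01 - l11 + 1) * |Real.sigmoid (∑ i, x i * θ i) - Real.sigmoid (∑ i, x i * θ' i)| := by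
      rw [lossGap_sub_lossGap, abs_mul, abs_of_pos hc_pos, abs_sub_comm]
    _ ≤ (l01 - l11 + 1) * ((ε / lmax) / 4) := by
      gcongr
      exact (abs_sigmoid_sub_sigmoid_le _ _).trans (by gcongr)
    _ ≤ 2 * lmax * (ε / lmax / 4) := by gcongr
    _ ≤ ε := by
      field_simp
      linarith

/-- If `‖θ − θ'‖₁ ≤ ε/(l_max·x_max)` with `l_max = max(1, l01 − l11)`, then for
every context with `‖x‖_∞ ≤ x_max` the distortion rate satisfies `d(θ,θ';x) ≤ ε`. -/
theorem distRate_le_of_l1_close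
    (d : ℕ) (l01 l11 : ℝ) (h11 : 0 ≤ l11) (hlt : l11 < l01)
    (xmax : ℝ) (hx : 0 < xmax)
    (ε : ℝ) (hε0 : 0 < ε) (hε1 : ε < min 1 (l01 - l11))
    (θ θ' x : Fin d → ℝ)
    (hθ : ∑ i, |θ i - θ' i| ≤ ε / (max 1 (l01 - l11) * xmax))
    (hxb : ∀ i, |x i| ≤ xmax) :
    distRate l01 l11 θ θ' x ≤ ε :=
  distRate_le_of_l1_close_general d l01 l11 hlt xmax hx ε hε0 θ θ' x hθ hxb
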